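/- arXiv:2508.20045 — 3 statements merged into one kernel-verified Lean document; each statement's English description precedes it below -/
import Mathlib

section
/- Let K₁, K₂ ⊆ ℝⁿ be closed sets such that K₁ is derivable on ∂K₁ ∩ ∂K₂, i.e. T_{K₁}(x) = T^a_{K₁}(x) for all x ∈ ∂K₁ ∩ ∂K₂. Let x₀ ∈ ∂K₁ ∩ ∂K₂ and assume the transversality condition (◇): there exist a neighborhood N(x₀) of x₀, c > 0 and α ∈ [0,1) such that for all x₁ ∈ (∂K₁ \ K₂) ∩ N(x₀) and x₂ ∈ (∂K₂ \ K₁) ∩ N(x₀) there exist v₁ ∈ T_{K₁}(x₁) and v₂ ∈ T_{K₂}(x₂) with |(v₁,v₂)| ≤ c·|x₁ − x₂| and x₂ − x₁ ∈ v₁ − v₂ + α·|x₁ − x₂|·𝔹. Then T^a_{K₁}(x₀) ∩ T^a_{K₂}(x₀) = T^a_{K₁ ∩ K₂}(x₀). -/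
open MeasureTheory Filter Topology Set
open scoped RealInnerProductSpace

/-- Euclidean space ℝⁿ. -/
abbrev Euc (n : ℕ) := EuclideanSpace ℝ (Fin n)

variable {E : Type*} [NormedAddCommGroup E] [InnerProductSpace ℝ E]

/-- The contingent (Bouligand) cone to `S` at `x`:
`v` belongs to it iff there are sequences `tᵢ → 0⁺` and `vᵢ → v` with `x + tᵢ • vᵢ ∈ S`. -/
def contingentCone (S : Set E) (x : E) : Set E :=
  {v | ∃ t : ℕ → ℝ, ∃ w : ℕ → E,
    (∀ i, 0 < t i) ∧ Tendsto t atTop (𝓝 0) ∧ Tendsto w atTop (𝓝 v) ∧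
    ∀ i, x + t i • w i ∈ S}

/-- The adjacent cone to `S` at `x`:
`v` belongs to it iff for every sequence `tᵢ → 0⁺` there is `vᵢ → v` with `x + tᵢ • vᵢ ∈ S`. -/
def adjacentCone (S : Set E) (x : E) : Set E :=
  {v | ∀ t : ℕ → ℝ, (∀ i, 0 < t i) → Tendsto t atTop (𝓝 0) →
    ∃ w : ℕ → E, Tendsto w atTop (𝓝 v) ∧ ∀ i, x + t i • w i ∈ S}

/-- The Dubovitskiy cone to `S` at `x`. -/
def dubovitskiyCone (S : Set E) (x : E) : Set E :=
  {v | ∀ t : ℕ → ℝ, ∀ w : ℕ → E, (∀ i, 0 < t i) → Tendsto t atTop (𝓝 0) →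
    Tendsto w atTop (𝓝 v) → ∀ᶠ i in atTop, x + t i • w i ∈ interior S}

/-- Lower semicontinuity of a set-valued map at a point along a filter `l`. -/
def SVLowerSemicontinuousAt (F : E → Set E) (l : Filter E) (x : E) : Prop :=
  ∀ U : Set E, IsOpen U → (F x ∩ U).Nonempty → ∀ᶠ y in l, (F y ∩ U).Nonempty

/-- Upper semicontinuity of a set-valued map at a point along a filter `l`. -/
def SVUpperSemicontinuousAt (F : E → Set E) (l : Filter E) (x : E) : Prop :=
  ∀ U : Set E, IsOpen U → F x ⊆ U → ∀ᶠ y in l, F y ⊆ U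

/-- Continuity (lower and upper semicontinuity) of a set-valued map at `x` along `l`. -/
def SVContinuousAt (F : E → Set E) (l : Filter E) (x : E) : Prop :=
  SVLowerSemicontinuousAt F l x ∧ SVUpperSemicontinuousAt F l x

/-- Continuity of a set-valued map. -/
def SVContinuous (F : E → Set E) : Prop := ∀ x, SVContinuousAt F (𝓝 x) x

/-- Local boundedness of a set-valued map. -/
def SVLocallyBounded (F : E → Set E) : Prop :=
  ∀ x : E, ∃ N ∈ 𝓝 x, ∃ M : ℝ, ∀ y ∈ N, ∀ v ∈ F y, ‖v‖ ≤ M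

/-- One-sided local Lipschitz continuity of a set-valued map. -/
def OneSidedLocallyLipschitz (F : E → Set E) : Prop :=
  ∀ N : Set E, N.Nonempty → IsCompact N → ∃ k > 0, ∀ x₁ ∈ N, ∀ x₂ ∈ N,
    ∀ w₁ ∈ F x₁, ∃ w₂ ∈ F x₂, ⟪x₁ - x₂, w₁⟫ ≤ ⟪x₁ - x₂, w₂⟫ + k * ‖x₁ - x₂‖ ^ 2

/-- The standing assumption (SA): `C` closed; `F x` nonempty, closed, convex on `C`;
`F` continuous and one-sided locally Lipschitz. -/
structure StandingAssumption (F : E → Set E) (C : Set E) : Prop where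
  closed_C : IsClosed C
  nonempty_images : ∀ x ∈ C, (F x).Nonempty
  closed_images : ∀ x ∈ C, IsClosed (F x)
  convex_images : ∀ x ∈ C, Convex ℝ (F x)
  continuous : SVContinuous F
  osLipschitz : OneSidedLocallyLipschitz F

/-- Admissible solution domains: `[0,T]` with `T ≥ 0`, or `[0,T)` with `T ∈ (0,∞]`. -/
def IsSolDomain (D : Set ℝ) : Prop :=
  (∃ T : ℝ, 0 ≤ T ∧ D = Icc 0 T) ∨ (∃ T : ℝ, 0 < T ∧ D = Ico 0 T) ∨ D = Ici 0

/-- `φ` is a solution of the constrained differential inclusion `ẋ ∈ F(x)`, `x ∈ C`,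
on the domain `D`: it stays in `C` and is a locally absolutely continuous arc whose
derivative is an integrable selection of `F ∘ φ` almost everywhere. -/
def IsSolution (F : E → Set E) (C : Set E) (D : Set ℝ) (φ : ℝ → E) : Prop :=
  IsSolDomain D ∧ (∀ t ∈ D, φ t ∈ C) ∧
  ∃ g : ℝ → E,
    (∀ᵐ t ∂(volume.restrict D), g t ∈ F (φ t)) ∧
    ∀ t ∈ D, IntervalIntegrable g volume 0 t ∧ φ t = φ 0 + ∫ s in (0:ℝ)..t, g s

/-- Forward invariance of `K` for the constrained differential inclusion. -/
def ForwardInvariant (F : E → Set E) (C K : Set E) : Prop :=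
  ∀ D : Set ℝ, ∀ φ : ℝ → E, IsSolution F C D φ → φ 0 ∈ K → ∀ t ∈ D, φ t ∈ K

/-- The set 𝒫 of critical points: points of `∂K ∩ ∂C` every neighborhood of which
meets `C \ K`. -/
def critSet (K C : Set E) : Set E :=
  {x | x ∈ frontier K ∩ frontier C ∧ ∀ N ∈ 𝓝 x, (N ∩ (C \ K)).Nonempty}

/-- The set of initial speeds `F_φ(x)` of an arc `φ` at `x`. -/
def initialSpeeds (φ : ℝ → E) (x : E) : Set E :=
  {v | ∃ t : ℕ → ℝ, (∀ i, 0 < t i) ∧ Tendsto t atTop (𝓝 0) ∧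
    Tendsto (fun i => (t i)⁻¹ • (φ (t i) - x)) atTop (𝓝 v)}

/-- The metric projection of `y` onto `S`. -/
def projSet (S : Set E) (y : E) : Set E := {z ∈ S | dist y z = Metric.infDist y S}

/-- `φ` leaves `K` immediately: for some `T > 0`, `φ(t) ∈ C \ K` on `(0,T]`. -/
def LeavesImmediately (K C : Set E) (D : Set ℝ) (φ : ℝ → E) : Prop :=
  ∃ T > 0, Ioc 0 T ⊆ D ∧ ∀ t ∈ Ioc 0 T, φ t ∈ C \ K

/-- Property (★): for some `T > 0`, `Proj_{∂K}(φ(t)) ∩ int C ≠ ∅` on `(0,T]`. -/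
def PropStar (K C : Set E) (D : Set ℝ) (φ : ℝ → E) : Prop :=
  ∃ T > 0, Ioc 0 T ⊆ D ∧
    ∀ t ∈ Ioc 0 T, (projSet (frontier K) (φ t) ∩ interior C).Nonempty

/-- Euclidean norm of the concatenated vector `(v₁, v₂) ∈ ℝ²ⁿ`. -/
noncomputable def pairNorm (v₁ v₂ : E) : ℝ := Real.sqrt (‖v₁‖ ^ 2 + ‖v₂‖ ^ 2)

/-- Assumption 1: `F(x) ⊆ T_K(x)` on 𝒫. -/
def Assumption1 (F : E → Set E) (K C : Set E) : Prop :=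
  ∀ x ∈ critSet K C, F x ⊆ contingentCone K x

/-- Assumption 2: `F(x) ∩ T_{∂K ∩ ∂C}(x) = ∅` on 𝒫. -/
def Assumption2 (F : E → Set E) (K C : Set E) : Prop :=
  ∀ x ∈ critSet K C, F x ∩ contingentCone (frontier K ∩ frontier C) x = ∅

/-- Assumption 3 (transversality) at a point `x`. -/
def Assumption3At (K C : Set E) (x : E) : Prop :=
  contingentCone (frontier K) x = adjacentCone (frontier K) x ∧
  contingentCone C x = adjacentCone C x ∧
  ∃ N ∈ 𝓝 x, ∃ c > 0, ∃ α ∈ Ico (0:ℝ) 1,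
    ∀ x₁ ∈ (frontier K \ C) ∩ N, ∀ x₂ ∈ (frontier C \ frontier K) ∩ N,
      ∃ v₁ ∈ contingentCone (frontier K) x₁, ∃ v₂ ∈ contingentCone C x₂,
        pairNorm v₁ v₂ ≤ c * ‖x₁ - x₂‖ ∧ ‖(x₂ - x₁) - (v₁ - v₂)‖ ≤ α * ‖x₁ - x₂‖

/-- Assumption 3 (transversality) on 𝒫. -/
def Assumption3 (K C : Set E) : Prop := ∀ x ∈ critSet K C, Assumption3At K C x

/-- The transversality condition (◇) for a pair of sets at `x₀`. -/
def TransversalAt (K₁ K₂ : Set E) (x₀ : E) : Prop :=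
  ∃ N ∈ 𝓝 x₀, ∃ c > 0, ∃ α ∈ Ico (0:ℝ) 1,
    ∀ x₁ ∈ (frontier K₁ \ K₂) ∩ N, ∀ x₂ ∈ (frontier K₂ \ K₁) ∩ N,
      ∃ v₁ ∈ contingentCone K₁ x₁, ∃ v₂ ∈ contingentCone K₂ x₂,
        pairNorm v₁ v₂ ≤ c * ‖x₁ - x₂‖ ∧ ‖(x₂ - x₁) - (v₁ - v₂)‖ ≤ α * ‖x₁ - x₂‖


/-!
Transversality yields a local error bound for the intersection: for `p ∈ K₁` and `q ∈ K₂` near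
`x₀` there is `r ∈ K₁ ∩ K₂` with `‖r - p‖ ≤ κ ‖p - q‖`. The point `r` is found by minimising
`‖y₁ - y₂‖ + ε (‖y₁ - p‖ + ‖y₂ - q‖)` over `K₁ × K₂` near `x₀`, a compact form of Ekeland's
principle. If a minimiser had `z₁ ≠ z₂`, then `z₁ ∈ ∂K₁ \ K₂` and `z₂ ∈ ∂K₂ \ K₁`, and the
first-order conditions `⟪z₁ - z₂, v₁⟫ ≥ -ε ‖z₁ - z₂‖ ‖v₁‖`, `⟪z₂ - z₁, v₂⟫ ≥ -ε ‖z₁ - z₂‖ ‖v₂‖`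
for the tangent vectors `v₁, v₂` provided by (◇) would force `1 ≤ α + 2 ε c`, which fails for
small `ε`. With the error bound, points `x₀ + tᵢ w₁ᵢ ∈ K₁` and `x₀ + tᵢ w₂ᵢ ∈ K₂` realising `v`
in both adjacent cones are moved into `K₁ ∩ K₂` by `O(tᵢ ‖w₁ᵢ - w₂ᵢ‖) = o(tᵢ)`.
-/

section TransversalIntersection

variable {K₁ K₂ N : Set E} {c α ε : ℝ}

lemma norm_le_pairNorm_left {F : Type*} [NormedAddCommGroup F] (v₁ v₂ : F) :
    ‖v₁‖ ≤ pairNorm v₁ v₂ :=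
  Real.le_sqrt_of_sq_le (le_add_of_nonneg_right (sq_nonneg _))

lemma norm_le_pairNorm_right {F : Type*} [NormedAddCommGroup F] (v₁ v₂ : F) :
    ‖v₂‖ ≤ pairNorm v₁ v₂ :=
  Real.le_sqrt_of_sq_le (le_add_of_nonneg_left (sq_nonneg _))

lemma adjacentCone_mono {S T : Set E} (hST : S ⊆ T) (x : E) :
    adjacentCone S x ⊆ adjacentCone T x := fun _ hv t ht₀ ht =>
  let ⟨w, hw, hwS⟩ := hv t ht₀ ht
  ⟨w, hw, fun i => hST (hwS i)⟩

lemma mem_adjacentCone_of_eventually {S : Set E} {x v : E} (hx : x ∈ S)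
    (h : ∀ t : ℕ → ℝ, (∀ i, 0 < t i) → Tendsto t atTop (𝓝 0) →
      ∃ w : ℕ → E, Tendsto w atTop (𝓝 v) ∧ ∀ᶠ i in atTop, x + t i • w i ∈ S) :
    v ∈ adjacentCone S x := by
  intro t ht₀ ht
  obtain ⟨w, hw, hwS⟩ := h t ht₀ ht
  obtain ⟨i₀, hi₀⟩ := eventually_atTop.1 hwS
  refine ⟨fun i => if i₀ ≤ i then w i else 0, ?_, fun i => ?_⟩
  · exact hw.congr' (eventually_atTop.2 ⟨i₀, fun i hi => (if_pos hi).symm⟩)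
  · dsimp only
    split_ifs with hi
    · exact hi₀ i hi
    · simpa using hx

lemma exists_pair_forall_norm_sub_le_add {F : Type*} [NormedAddCommGroup F] {S₁ S₂ : Set F}
    (h₁ : IsCompact S₁) (h₂ : IsCompact S₂) (hε : 0 ≤ ε) {p q : F} (hp : p ∈ S₁) (hq : q ∈ S₂) :
    ∃ z₁ ∈ S₁, ∃ z₂ ∈ S₂, ε * (‖z₁ - p‖ + ‖z₂ - q‖) ≤ ‖p - q‖ ∧
      ∀ y₁ ∈ S₁, ∀ y₂ ∈ S₂, ‖z₁ - z₂‖ ≤ ‖y₁ - y₂‖ + ε * (‖y₁ - z₁‖ + ‖y₂ - z₂‖) := by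
  obtain ⟨z, ⟨hz₁, hz₂⟩, hmin⟩ := (h₁.prod h₂).exists_isMinOn ⟨(p, q), hp, hq⟩
    (f := fun y : F × F => ‖y.1 - y.2‖ + ε * (‖y.1 - p‖ + ‖y.2 - q‖)) (by fun_prop)
  refine ⟨z.1, hz₁, z.2, hz₂, ?_, fun y₁ hy₁ y₂ hy₂ => ?_⟩
  · have h := hmin (mk_mem_prod hp hq)
    simp only [mem_ofPred_eq, sub_self, norm_zero, add_zero, mul_zero] at h
    linarith [norm_nonneg (z.1 - z.2)]
  · have h := hmin (mk_mem_prod hy₁ hy₂)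
    have h₁ := norm_sub_le_norm_sub_add_norm_sub y₁ z.1 p
    have h₂ := norm_sub_le_norm_sub_add_norm_sub y₂ z.2 q
    simp only [mem_ofPred_eq] at h
    nlinarith

lemma neg_mul_sub_le_inner_of_norm_le {a u : E} {s : ℝ} (hs : 0 < s)
    (hsmall : ε * (s * ‖u‖) ≤ ‖a‖) (h : ‖a‖ ≤ ‖a + s • u‖ + ε * (s * ‖u‖)) :
    -(ε * ‖a‖ * ‖u‖) - s * ‖u‖ ^ 2 / 2 ≤ ⟪a, u⟫ := by
  have hsq : (‖a‖ - ε * (s * ‖u‖)) ^ 2 ≤ ‖a + s • u‖ ^ 2 :=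
    pow_le_pow_left₀ (sub_nonneg.2 hsmall) (by linarith) 2
  rw [norm_add_sq_real, real_inner_smul_right, norm_smul, Real.norm_of_nonneg hs.le] at hsq
  nlinarith [sq_nonneg (ε * s * ‖u‖), norm_nonneg u]

lemma neg_mul_le_inner_of_isLocalMinOn {S : Set E} {a b v : E}
    (hmin : IsLocalMinOn (fun y => ‖y - b‖ + ε * ‖y - a‖) S a) (hv : v ∈ contingentCone S a) :
    -(ε * ‖a - b‖ * ‖v‖) ≤ ⟪a - b, v⟫ := by
  obtain ⟨s, u, hs₀, hs, hu, huS⟩ := hv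
  rcases eq_or_ne a b with rfl | hab
  · simp
  have hy : Tendsto (fun j => a + s j • u j) atTop (𝓝[S] a) :=
    tendsto_nhdsWithin_iff.2 ⟨by simpa using tendsto_const_nhds.add (hs.smul hu),
      Eventually.of_forall huS⟩
  have hεsu : Tendsto (fun j => ε * (s j * ‖u j‖)) atTop (𝓝 0) := by
    simpa using (hs.mul hu.norm).const_mul ε
  have hsmall : ∀ᶠ j in atTop, ε * (s j * ‖u j‖) ≤ ‖a - b‖ :=
    hεsu.eventually_le_const (norm_sub_pos_iff.2 hab)
  have hlim : Tendsto (fun j => -(ε * ‖a - b‖ * ‖u j‖) - s j * ‖u j‖ ^ 2 / 2) atTop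
      (𝓝 (-(ε * ‖a - b‖ * ‖v‖))) := by
    simpa using ((hu.norm.const_mul (ε * ‖a - b‖)).neg.sub ((hs.mul (hu.norm.pow 2)).div_const 2))
  refine le_of_tendsto_of_tendsto hlim (tendsto_const_nhds.inner hu) ?_
  filter_upwards [hy.eventually hmin, hsmall] with j hj hj'
  refine neg_mul_sub_le_inner_of_norm_le (hs₀ j) hj' ?_
  simpa [add_sub_right_comm, norm_smul, Real.norm_of_nonneg (hs₀ j).le] using hj

lemma mem_frontier_of_isLocalMinOn {S : Set E} {a b : E} (hε : ε < 1) (ha : a ∈ S) (hab : a ≠ b)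
    (hmin : IsLocalMinOn (fun y => ‖y - b‖ + ε * ‖y - a‖) S a) : a ∈ frontier S := by
  refine ⟨subset_closure ha, fun hint => ?_⟩
  have hline := IsLocalMin.comp_continuous (g := fun s : ℝ => a + s • (b - a)) (b := 0)
    (by simpa using hmin.isLocalMin (mem_interior_iff_mem_nhds.1 hint)) (by fun_prop)
  obtain ⟨s, hs, hs₀, hs₁⟩ :=
    ((hline.filter_mono nhdsWithin_le_nhds).and (Ioo_mem_nhdsGT one_pos)).exists
  have h₁ : a + s • (b - a) - b = (1 - s) • (a - b) := by module
  have h₂ : a + s • (b - a) - a = s • (b - a) := by module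
  simp only [h₁, h₂, norm_smul, Real.norm_of_nonneg hs₀.le,
    Real.norm_of_nonneg (sub_nonneg.2 hs₁.le), Function.comp_apply, zero_smul, add_zero, sub_self,
    norm_zero, mul_zero, norm_sub_rev b a] at hs
  nlinarith [mul_pos (mul_pos (sub_pos.2 hε) hs₀) (norm_sub_pos_iff.2 hab)]

lemma one_le_add_of_inner_bounds {x₁ x₂ v₁ v₂ : E} (hne : x₁ ≠ x₂) (hε : 0 ≤ ε)
    (hv₁ : ‖v₁‖ ≤ c * ‖x₁ - x₂‖) (hv₂ : ‖v₂‖ ≤ c * ‖x₁ - x₂‖)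
    (hdir : ‖(x₂ - x₁) - (v₁ - v₂)‖ ≤ α * ‖x₁ - x₂‖)
    (h₁ : -(ε * ‖x₁ - x₂‖ * ‖v₁‖) ≤ ⟪x₁ - x₂, v₁⟫)
    (h₂ : -(ε * ‖x₂ - x₁‖ * ‖v₂‖) ≤ ⟪x₂ - x₁, v₂⟫) :
    1 ≤ α + 2 * ε * c := by
  set d := ‖x₁ - x₂‖
  have hd : 0 < d := norm_sub_pos_iff.2 hne
  rw [norm_sub_rev] at h₂
  have hcs : -(d * (α * d)) ≤ ⟪x₁ - x₂, (x₂ - x₁) - (v₁ - v₂)⟫ :=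
    le_trans (neg_le_neg (mul_le_mul_of_nonneg_left hdir hd.le))
      (neg_le_of_abs_le (abs_real_inner_le_norm _ _))
  have hexp : ⟪x₁ - x₂, (x₂ - x₁) - (v₁ - v₂)⟫ = -d ^ 2 - ⟪x₁ - x₂, v₁⟫ - ⟪x₂ - x₁, v₂⟫ := by
    rw [← neg_sub x₁ x₂, inner_sub_right, inner_sub_right, inner_neg_right, inner_neg_left,
      real_inner_self_eq_norm_sq]
    ring
  have hεd : 0 ≤ ε * d := mul_nonneg hε hd.le
  nlinarith [mul_le_mul_of_nonneg_left hv₁ hεd, mul_le_mul_of_nonneg_left hv₂ hεd, mul_pos hd hd]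

def TransversalOn (K₁ K₂ N : Set E) (c α : ℝ) : Prop :=
  ∀ x₁ ∈ (frontier K₁ \ K₂) ∩ N, ∀ x₂ ∈ (frontier K₂ \ K₁) ∩ N,
    ∃ v₁ ∈ contingentCone K₁ x₁, ∃ v₂ ∈ contingentCone K₂ x₂,
      pairNorm v₁ v₂ ≤ c * ‖x₁ - x₂‖ ∧ ‖(x₂ - x₁) - (v₁ - v₂)‖ ≤ α * ‖x₁ - x₂‖

lemma TransversalOn.false_of_isLocalMinOn (H : TransversalOn K₁ K₂ N c α) (hε₀ : 0 ≤ ε)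
    (hε₁ : ε < 1) (hε : α + 2 * ε * c < 1) {z₁ z₂ : E}
    (hz₁ : z₁ ∈ (K₁ \ K₂) ∩ N) (hz₂ : z₂ ∈ (K₂ \ K₁) ∩ N)
    (h₁ : IsLocalMinOn (fun y => ‖y - z₂‖ + ε * ‖y - z₁‖) K₁ z₁)
    (h₂ : IsLocalMinOn (fun y => ‖y - z₁‖ + ε * ‖y - z₂‖) K₂ z₂) : False := by
  have hne : z₁ ≠ z₂ := fun h => hz₁.1.2 (h ▸ hz₂.1.1)
  obtain ⟨v₁, hv₁, v₂, hv₂, hnorm, hdir⟩ :=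
    H z₁ ⟨⟨mem_frontier_of_isLocalMinOn hε₁ hz₁.1.1 hne h₁, hz₁.1.2⟩, hz₁.2⟩
      z₂ ⟨⟨mem_frontier_of_isLocalMinOn hε₁ hz₂.1.1 hne.symm h₂, hz₂.1.2⟩, hz₂.2⟩
  exact hε.not_ge <| one_le_add_of_inner_bounds hne hε₀
    ((norm_le_pairNorm_left v₁ v₂).trans hnorm) ((norm_le_pairNorm_right v₁ v₂).trans hnorm) hdir
    (neg_mul_le_inner_of_isLocalMinOn h₁ hv₁) (neg_mul_le_inner_of_isLocalMinOn h₂ hv₂)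

lemma TransversalOn.eq_of_forall_norm_sub_le (H : TransversalOn K₁ K₂ N c α) (hε₀ : 0 ≤ ε)
    (hε₁ : ε < 1) (hε : α + 2 * ε * c < 1) {B : Set E} {z₁ z₂ : E}
    (hz₁ : z₁ ∈ K₁ ∩ N) (hz₂ : z₂ ∈ K₂ ∩ N) (hB₁ : B ∈ 𝓝 z₁) (hB₂ : B ∈ 𝓝 z₂)
    (hmin : ∀ y₁ ∈ K₁ ∩ B, ∀ y₂ ∈ K₂ ∩ B,
      ‖z₁ - z₂‖ ≤ ‖y₁ - y₂‖ + ε * (‖y₁ - z₁‖ + ‖y₂ - z₂‖)) :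
    z₁ = z₂ := by
  by_contra hne
  have hd : 0 < ‖z₁ - z₂‖ := norm_sub_pos_iff.2 hne
  have hz₁B : z₁ ∈ K₁ ∩ B := ⟨hz₁.1, mem_of_mem_nhds hB₁⟩
  have hz₂B : z₂ ∈ K₂ ∩ B := ⟨hz₂.1, mem_of_mem_nhds hB₂⟩
  have hz₁K₂ : z₁ ∉ K₂ := fun h => by
    have := hmin z₁ hz₁B z₁ ⟨h, hz₁B.2⟩
    simp only [sub_self, norm_zero, zero_add] at this
    nlinarith
  have hz₂K₁ : z₂ ∉ K₁ := fun h => by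
    have := hmin z₂ ⟨h, hz₂B.2⟩ z₂ hz₂B
    simp only [sub_self, norm_zero, zero_add, add_zero, norm_sub_rev z₂ z₁] at this
    nlinarith
  refine H.false_of_isLocalMinOn hε₀ hε₁ hε ⟨⟨hz₁.1, hz₁K₂⟩, hz₁.2⟩ ⟨⟨hz₂.1, hz₂K₁⟩, hz₂.2⟩
    ?_ ?_
  · filter_upwards [inter_mem_nhdsWithin K₁ hB₁] with y hy
    simpa using hmin y hy z₂ hz₂B
  · filter_upwards [inter_mem_nhdsWithin K₂ hB₂] with y hy
    simpa [norm_sub_rev z₁ y, norm_sub_rev z₂ z₁] using hmin z₁ hz₁B y hy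

lemma exists_pos_lt_one_add_two_mul_lt_one (hα : α < 1) (c : ℝ) :
    ∃ ε, 0 < ε ∧ ε < 1 ∧ α + 2 * ε * c < 1 := by
  have hlim : Tendsto (fun ε : ℝ => α + 2 * ε * c) (𝓝 0) (𝓝 α) := by
    simpa using (by fun_prop : Continuous fun ε : ℝ => α + 2 * ε * c).tendsto 0
  have hsmall : ∀ᶠ ε in 𝓝 (0 : ℝ), ε < 1 ∧ α + 2 * ε * c < 1 :=
    (eventually_lt_nhds one_pos).and (hlim.eventually_lt_const hα)
  exact ((eventually_mem_nhdsWithin (s := Ioi 0)).and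
    (hsmall.filter_mono nhdsWithin_le_nhds)).exists

lemma TransversalAt.exists_mem_inter_norm_sub_le [ProperSpace E] {x₀ : E}
    (hK₁ : IsClosed K₁) (hK₂ : IsClosed K₂) (htrans : TransversalAt K₁ K₂ x₀) :
    ∃ κ : ℝ, ∀ᶠ pq : E × E in 𝓝 (x₀, x₀), pq.1 ∈ K₁ → pq.2 ∈ K₂ →
      ∃ r ∈ K₁ ∩ K₂, ‖r - pq.1‖ ≤ κ * ‖pq.1 - pq.2‖ := by
  obtain ⟨N, hN, c, -, α, hα, H⟩ :
      ∃ N ∈ 𝓝 x₀, ∃ c > 0, ∃ α ∈ Ico (0 : ℝ) 1, TransversalOn K₁ K₂ N c α := htrans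
  obtain ⟨ρ, hρ, hρN⟩ := Metric.nhds_basis_closedBall.mem_iff.1 hN
  obtain ⟨ε, hε₀, hε₁, hε⟩ := exists_pos_lt_one_add_two_mul_lt_one hα.2 c
  have hδ : 0 < ε * ρ / 4 := by positivity
  have hδρ : ε * ρ / 4 < ρ / 4 := by nlinarith
  refine ⟨ε⁻¹, ?_⟩
  filter_upwards [prod_mem_nhds (Metric.ball_mem_nhds x₀ hδ) (Metric.ball_mem_nhds x₀ hδ)]
    with ⟨p, q⟩ ⟨hp, hq⟩ hpK hqK
  rw [Metric.mem_ball] at hp hq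
  have hpq : ‖p - q‖ < ε * ρ / 2 := by
    linarith [dist_triangle_right p q x₀, dist_eq_norm p q]
  obtain ⟨z₁, hz₁, z₂, hz₂, hzpq, hmin⟩ := exists_pair_forall_norm_sub_le_add
    ((isCompact_closedBall x₀ ρ).inter_left hK₁) ((isCompact_closedBall x₀ ρ).inter_left hK₂)
    hε₀.le ⟨hpK, by rw [Metric.mem_closedBall]; linarith⟩
    ⟨hqK, by rw [Metric.mem_closedBall]; linarith⟩
  have hz₁p : ‖z₁ - p‖ < ρ / 2 :=
    lt_of_mul_lt_mul_left (by nlinarith [norm_nonneg (z₂ - q)]) hε₀.le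
  have hz₂q : ‖z₂ - q‖ < ρ / 2 :=
    lt_of_mul_lt_mul_left (by nlinarith [norm_nonneg (z₁ - p)]) hε₀.le
  have hz₁ρ : dist z₁ x₀ < ρ := by linarith [dist_triangle z₁ p x₀, dist_eq_norm z₁ p]
  have hz₂ρ : dist z₂ x₀ < ρ := by linarith [dist_triangle z₂ q x₀, dist_eq_norm z₂ q]
  have heq : z₁ = z₂ := H.eq_of_forall_norm_sub_le hε₀.le hε₁ hε
    ⟨hz₁.1, hρN (Metric.ball_subset_closedBall hz₁ρ)⟩
    ⟨hz₂.1, hρN (Metric.ball_subset_closedBall hz₂ρ)⟩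
    (Metric.closedBall_mem_nhds_of_mem hz₁ρ) (Metric.closedBall_mem_nhds_of_mem hz₂ρ) hmin
  exact ⟨z₁, ⟨hz₁.1, heq ▸ hz₂.1⟩,
    (le_inv_mul_iff₀ hε₀).2 (by nlinarith [norm_nonneg (z₂ - q)])⟩

lemma inter_adjacentCone_subset_adjacentCone_inter {x₀ : E} (hx₀ : x₀ ∈ K₁ ∩ K₂) {κ : ℝ}
    (hreg : ∀ᶠ pq : E × E in 𝓝 (x₀, x₀), pq.1 ∈ K₁ → pq.2 ∈ K₂ →
      ∃ r ∈ K₁ ∩ K₂, ‖r - pq.1‖ ≤ κ * ‖pq.1 - pq.2‖) :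
    adjacentCone K₁ x₀ ∩ adjacentCone K₂ x₀ ⊆ adjacentCone (K₁ ∩ K₂) x₀ := by
  rintro v ⟨hv₁, hv₂⟩
  refine mem_adjacentCone_of_eventually hx₀ fun t ht₀ ht => ?_
  obtain ⟨w₁, hw₁, hw₁K⟩ := hv₁ t ht₀ ht
  obtain ⟨w₂, hw₂, hw₂K⟩ := hv₂ t ht₀ ht
  have hpq : Tendsto (fun i => (x₀ + t i • w₁ i, x₀ + t i • w₂ i)) atTop (𝓝 (x₀, x₀)) := by
    have h₁ : Tendsto (fun i => x₀ + t i • w₁ i) atTop (𝓝 x₀) := by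
      simpa using tendsto_const_nhds.add (ht.smul hw₁)
    have h₂ : Tendsto (fun i => x₀ + t i • w₂ i) atTop (𝓝 x₀) := by
      simpa using tendsto_const_nhds.add (ht.smul hw₂)
    exact h₁.prodMk_nhds h₂
  obtain ⟨r, hr⟩ := ((hpq.eventually hreg).mono fun i hi => hi (hw₁K i) (hw₂K i)).choice
  refine ⟨fun i => (t i)⁻¹ • (r i - x₀), ?_,
    hr.mono fun i hi => by simpa [smul_inv_smul₀ (ht₀ i).ne'] using hi.1⟩
  have hgap : Tendsto (fun i => κ * ‖w₁ i - w₂ i‖) atTop (𝓝 0) := by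
    simpa using (hw₁.sub hw₂).norm.const_mul κ
  have hclose : Tendsto (fun i => (t i)⁻¹ • (r i - x₀) - w₁ i) atTop (𝓝 0) := by
    refine squeeze_zero_norm' (hr.mono fun i hi => ?_) hgap
    have hti : 0 < t i := ht₀ i
    have hrw : (t i)⁻¹ • (r i - x₀) - w₁ i = (t i)⁻¹ • (r i - (x₀ + t i • w₁ i)) := by
      simp only [smul_sub, smul_add, inv_smul_smul₀ hti.ne']
      abel
    calc ‖(t i)⁻¹ • (r i - x₀) - w₁ i‖ = (t i)⁻¹ * ‖r i - (x₀ + t i • w₁ i)‖ := by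
          rw [hrw, norm_smul, Real.norm_of_nonneg (inv_nonneg.2 hti.le)]
      _ ≤ (t i)⁻¹ * (κ * ‖t i • (w₁ i - w₂ i)‖) := by
          gcongr
          simpa [smul_sub] using hi.2
      _ = κ * ‖w₁ i - w₂ i‖ := by
          rw [norm_smul, Real.norm_of_nonneg hti.le]
          field_simp
  simpa using hclose.add hw₁

end TransversalIntersection

theorem adjacent_cone_intersection_general {n : ℕ} (K₁ K₂ : Set (Euc n))
    (hK₁ : IsClosed K₁) (hK₂ : IsClosed K₂)
    (x₀ : Euc n) (hx₀ : x₀ ∈ frontier K₁ ∩ frontier K₂)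
    (htrans : TransversalAt K₁ K₂ x₀) :
    adjacentCone K₁ x₀ ∩ adjacentCone K₂ x₀ = adjacentCone (K₁ ∩ K₂) x₀ := by
  obtain ⟨κ, hκ⟩ := htrans.exists_mem_inter_norm_sub_le hK₁ hK₂
  have hx₀K : x₀ ∈ K₁ ∩ K₂ := ⟨hK₁.frontier_subset hx₀.1, hK₂.frontier_subset hx₀.2⟩
  refine (inter_adjacentCone_subset_adjacentCone_inter hx₀K hκ).antisymm ?_
  exact subset_inter (adjacentCone_mono inter_subset_left x₀)
    (adjacentCone_mono inter_subset_right x₀)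

/-- Under derivability of `K₁` on `∂K₁ ∩ ∂K₂` and the transversality
condition (◇) at `x₀`, `T^a_{K₁}(x₀) ∩ T^a_{K₂}(x₀) = T^a_{K₁ ∩ K₂}(x₀)`. -/
theorem adjacent_cone_intersection {n : ℕ} (K₁ K₂ : Set (Euc n))
    (hK₁ : IsClosed K₁) (hK₂ : IsClosed K₂)
    (hder : ∀ x ∈ frontier K₁ ∩ frontier K₂, contingentCone K₁ x = adjacentCone K₁ x)
    (x₀ : Euc n) (hx₀ : x₀ ∈ frontier K₁ ∩ frontier K₂)
    (htrans : TransversalAt K₁ K₂ x₀) :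
    adjacentCone K₁ x₀ ∩ adjacentCone K₂ x₀ = adjacentCone (K₁ ∩ K₂) x₀ :=
  adjacent_cone_intersection_general K₁ K₂ hK₁ hK₂ x₀ hx₀ htrans
end

section
/- Let K₁, K₂ ⊆ ℝⁿ be closed, x₀ ∈ ∂K₁ ∩ ∂K₂, and assume the transversality condition (◇): there exist a neighborhood N(x₀) of x₀, c > 0 and α ∈ [0,1) such that for all x₁ ∈ (∂K₁ \ K₂) ∩ N(x₀) and x₂ ∈ (∂K₂ \ K₁) ∩ N(x₀) there exist v₁ ∈ T_{K₁}(x₁) and v₂ ∈ T_{K₂}(x₂) with |(v₁,v₂)| ≤ c·|x₁ − x₂| and x₂ − x₁ ∈ v₁ − v₂ + α·|x₁ − x₂|·𝔹. Let x_{1i} ∈ K₁ \ K₂ and x_{2i} ∈ K₂ \ K₁ be sequences with (x_{1i}, x_{2i}) → (x₀, x₀). Then there exist sequences x*_{1i} ∈ K₁ and x*_{2i} ∈ K₂, a constant l > 0, and a map σ : ℕ → {1,2} such that, after passing to a subsequence, x*_{σ(i) i} ∈ K₁ ∩ K₂ for all i and |x_{1i} − x*_{1i}| + |x_{2i} − x*_{2i}|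 ≤ l·|x_{1i} − x_{2i}| for all i. -/
set_option maxHeartbeats 800000


open MeasureTheory Filter Topology Set
open scoped RealInnerProductSpace

variable {E : Type*} [NormedAddCommGroup E] [InnerProductSpace ℝ E]

private lemma dir_ineq {n : ℕ} {K : Set (Euc n)} {w a v : Euc n} {ε d₀ : ℝ}
    (hd : 0 < ‖a‖) (hd₀ : 0 < d₀) (hε : 0 < ε)
    (hv : v ∈ contingentCone K w)
    (hE : ∀ u ∈ K, ‖u - w‖ ≤ d₀ → ‖a‖ ≤ ‖a + (u - w)‖ + ε * ‖u - w‖) :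
    0 ≤ ⟪a, v⟫ + ε * ‖a‖ * ‖v‖ := by
  obtain ⟨t, ws, htpos, ht0, hws, hmem⟩ := hv
  have hnorm : Tendsto (fun i => t i * ‖ws i‖) atTop (𝓝 0) := by
    simpa using ht0.mul hws.norm
  have hev1 : ∀ᶠ i in atTop, t i * ‖ws i‖ < d₀ := hnorm.eventually_lt_const hd₀
  have hev2 : ∀ᶠ i in atTop, ε * (t i * ‖ws i‖) < ‖a‖ := by
    have := (hnorm.const_mul ε).eventually_lt_const (show ε * 0 < ‖a‖ by simpa using hd)
    simpa using this
  have hkey : ∀ᶠ i in atTop, 0 ≤ ⟪a, ws i⟫ + ε * ‖a‖ * ‖ws i‖ + t i * ‖ws i‖ ^ 2 / 2 := by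
    filter_upwards [hev1, hev2] with i h1 h2
    have hu : ‖(w + t i • ws i) - w‖ = t i * ‖ws i‖ := by
      simp [norm_smul, abs_of_pos (htpos i)]
    have hE' := hE _ (hmem i) (by rw [hu]; exact h1.le)
    rw [hu] at hE'
    have heq : a + ((w + t i • ws i) - w) = a + t i • ws i := by abel
    rw [heq] at hE'
    have hle : ‖a‖ - ε * (t i * ‖ws i‖) ≤ ‖a + t i • ws i‖ := by linarith
    have hsq : (‖a‖ - ε * (t i * ‖ws i‖)) ^ 2 ≤ ‖a + t i • ws i‖ ^ 2 :=
      pow_le_pow_left₀ (by linarith) hle 2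
    have hexp : ‖a + t i • ws i‖ ^ 2
        = ‖a‖ ^ 2 + 2 * (t i * ⟪a, ws i⟫) + (t i * ‖ws i‖) ^ 2 := by
      rw [norm_add_sq_real, real_inner_smul_right, norm_smul, Real.norm_eq_abs,
        abs_of_pos (htpos i)]
    nlinarith [htpos i, sq_nonneg (ε * (t i * ‖ws i‖)), sq_nonneg ‖ws i‖]
  have h1 : Tendsto (fun i => ⟪a, ws i⟫) atTop (𝓝 ⟪a, v⟫) :=
    tendsto_const_nhds.inner hws
  have h2 : Tendsto (fun i => ε * ‖a‖ * ‖ws i‖) atTop (𝓝 (ε * ‖a‖ * ‖v‖)) :=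
    hws.norm.const_mul _
  have h3 : Tendsto (fun i => t i * ‖ws i‖ ^ 2 / 2) atTop (𝓝 0) := by
    have := (ht0.mul (hws.norm.pow 2)).div_const 2
    simpa using this
  have hlim := (h1.add h2).add h3
  rw [add_zero] at hlim
  exact ge_of_tendsto hlim hkey

private lemma arith_contra (d cc ε α n1 n2 i1 i2 ie : ℝ) (hd : 0 < d) (hc : 0 < cc)
    (hε : 0 < ε)
    (h1 : 0 ≤ i1 + ε * d * n1) (h2 : 0 ≤ -i2 + ε * d * n2)
    (h3 : i1 - i2 = -d ^ 2 - ie) (h4 : -ie ≤ d * (α * d))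
    (h5 : n1 ≤ cc * d) (h6 : n2 ≤ cc * d) (h7 : ε * (4 * cc) ≤ 1 - α) : False := by
  have hεd : (0:ℝ) ≤ ε * d := by positivity
  have k5 := mul_le_mul_of_nonneg_left h5 hεd
  have k6 := mul_le_mul_of_nonneg_left h6 hεd
  have hd2 : (0:ℝ) < d ^ 2 := by positivity
  have k7 := mul_le_mul_of_nonneg_right h7 hd2.le
  have k8 : (0:ℝ) < ε * cc * d ^ 2 := by positivity
  nlinarith [k5, k6, k7, k8]

private lemma key_step {n : ℕ} {K₁ K₂ : Set (Euc n)} (hK₁ : IsClosed K₁) (hK₂ : IsClosed K₂)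
    {N : Set (Euc n)} {x₀ : Euc n} {c α ε δ : ℝ}
    (hc : 0 < c) (hα0 : 0 ≤ α) (hα1 : α < 1)
    (hε : 0 < ε) (hε2 : ε ≤ 1 / 2) (hεα : ε ≤ (1 - α) / (4 * c))
    (hδ : 0 < δ) (hball : Metric.ball x₀ δ ⊆ N)
    (htr : ∀ z₁ ∈ (frontier K₁ \ K₂) ∩ N, ∀ z₂ ∈ (frontier K₂ \ K₁) ∩ N,
      ∃ v₁ ∈ contingentCone K₁ z₁, ∃ v₂ ∈ contingentCone K₂ z₂,
        pairNorm v₁ v₂ ≤ c * ‖z₁ - z₂‖ ∧ ‖(z₂ - z₁) - (v₁ - v₂)‖ ≤ α * ‖z₁ - z₂‖)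
    {p q : Euc n} (hp : p ∈ K₁ \ K₂) (hq : q ∈ K₂ \ K₁)
    (hpx : ‖p - x₀‖ < δ / 4) (hqx : ‖q - x₀‖ < δ / 4) (hpq : ‖p - q‖ ≤ ε * (δ / 4)) :
    ∃ y₁ ∈ K₁, ∃ y₂ ∈ K₂, (y₁ ∈ K₂ ∨ y₂ ∈ K₁) ∧
      ‖p - y₁‖ + ‖q - y₂‖ ≤ ε⁻¹ * ‖p - q‖ := by
  set d₀ : ℝ := ‖p - q‖ with hd₀def
  have hd₀ : 0 < d₀ := by
    rw [hd₀def, norm_pos_iff, sub_ne_zero]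
    rintro rfl
    exact hp.2 hq.1
  set R : ℝ := d₀ / ε + d₀ with hRdef
  have hR0 : 0 ≤ R := by positivity
  set g : Euc n × Euc n → ℝ :=
    fun u => ‖u.1 - u.2‖ + ε * (‖u.1 - p‖ + ‖u.2 - q‖) with hgdef
  set S : Set (Euc n × Euc n) :=
    (K₁ ∩ Metric.closedBall p R) ×ˢ (K₂ ∩ Metric.closedBall q R) with hSdef
  have hScomp : IsCompact S :=
    ((isCompact_closedBall p R).inter_left hK₁).prod
      ((isCompact_closedBall q R).inter_left hK₂)
  have hSne : S.Nonempty :=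
    ⟨(p, q), ⟨hp.1, Metric.mem_closedBall_self hR0⟩, ⟨hq.1, Metric.mem_closedBall_self hR0⟩⟩
  have hgc : ContinuousOn g S := by fun_prop
  obtain ⟨w, hwS, hmin⟩ := hScomp.exists_isMinOn hSne hgc
  have hw1K : w.1 ∈ K₁ := hwS.1.1
  have hw2K : w.2 ∈ K₂ := hwS.2.1
  have hgw : g w ≤ d₀ := by
    have := hmin (Set.mk_mem_prod ⟨hp.1, Metric.mem_closedBall_self hR0⟩
      ⟨hq.1, Metric.mem_closedBall_self hR0⟩)
    simpa [hgdef] using this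
  have hgw' : ‖w.1 - w.2‖ + ε * (‖w.1 - p‖ + ‖w.2 - q‖) ≤ d₀ := hgw
  have hw1b : ‖w.1 - p‖ ≤ d₀ / ε := by
    rw [le_div_iff₀ hε]
    nlinarith [norm_nonneg (w.1 - w.2), norm_nonneg (w.2 - q)]
  have hw2b : ‖w.2 - q‖ ≤ d₀ / ε := by
    rw [le_div_iff₀ hε]
    nlinarith [norm_nonneg (w.1 - w.2), norm_nonneg (w.1 - p)]
  have hdled₀ : ‖w.1 - w.2‖ ≤ d₀ := by nlinarith [norm_nonneg (w.1 - p), norm_nonneg (w.2 - q)]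
  -- Ekeland-type inequality
  have hEk : ∀ u₁ ∈ K₁, ∀ u₂ ∈ K₂, ‖u₁ - w.1‖ ≤ d₀ → ‖u₂ - w.2‖ ≤ d₀ →
      ‖w.1 - w.2‖ ≤ ‖u₁ - u₂‖ + ε * (‖u₁ - w.1‖ + ‖u₂ - w.2‖) := by
    intro u₁ hu₁ u₂ hu₂ hb₁ hb₂
    have hm₁ : u₁ ∈ K₁ ∩ Metric.closedBall p R := by
      refine ⟨hu₁, ?_⟩
      rw [Metric.mem_closedBall, dist_eq_norm]
      calc ‖u₁ - p‖ ≤ ‖u₁ - w.1‖ + ‖w.1 - p‖ := norm_sub_le_norm_sub_add_norm_sub _ _ _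
        _ ≤ d₀ + d₀ / ε := add_le_add hb₁ hw1b
        _ = R := by rw [hRdef]; ring
    have hm₂ : u₂ ∈ K₂ ∩ Metric.closedBall q R := by
      refine ⟨hu₂, ?_⟩
      rw [Metric.mem_closedBall, dist_eq_norm]
      calc ‖u₂ - q‖ ≤ ‖u₂ - w.2‖ + ‖w.2 - q‖ := norm_sub_le_norm_sub_add_norm_sub _ _ _
        _ ≤ d₀ + d₀ / ε := add_le_add hb₂ hw2b
        _ = R := by rw [hRdef]; ring
    have hmin' := hmin (Set.mk_mem_prod hm₁ hm₂)
    have hmin'' : ‖w.1 - w.2‖ + ε * (‖w.1 - p‖ + ‖w.2 - q‖)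
        ≤ ‖u₁ - u₂‖ + ε * (‖u₁ - p‖ + ‖u₂ - q‖) := hmin'
    have t₁ : ‖u₁ - p‖ ≤ ‖u₁ - w.1‖ + ‖w.1 - p‖ := norm_sub_le_norm_sub_add_norm_sub _ _ _
    have t₂ : ‖u₂ - q‖ ≤ ‖u₂ - w.2‖ + ‖w.2 - q‖ := norm_sub_le_norm_sub_add_norm_sub _ _ _
    nlinarith
  have hbound : ‖p - w.1‖ + ‖q - w.2‖ ≤ ε⁻¹ * d₀ := by
    rw [norm_sub_rev p, norm_sub_rev q, inv_mul_eq_div, le_div_iff₀ hε]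
    nlinarith [norm_nonneg (w.1 - w.2)]
  by_cases hc1 : w.1 ∈ K₂
  · exact ⟨w.1, hw1K, w.2, hw2K, Or.inl hc1, hbound⟩
  by_cases hc2 : w.2 ∈ K₁
  · exact ⟨w.1, hw1K, w.2, hw2K, Or.inr hc2, hbound⟩
  exfalso
  have hne : w.1 ≠ w.2 := by rintro h; exact hc1 (h ▸ hw2K)
  have hd : 0 < ‖w.1 - w.2‖ := by rwa [norm_pos_iff, sub_ne_zero]
  set d : ℝ := ‖w.1 - w.2‖ with hddef
  -- w.1 is on the frontier of K₁
  have hfr1 : w.1 ∈ frontier K₁ := by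
    rw [hK₁.frontier_eq]
    refine ⟨hw1K, fun hint => ?_⟩
    obtain ⟨r, hr, hrsub⟩ := Metric.isOpen_iff.mp isOpen_interior w.1 hint
    set s : ℝ := min (r / (2 * d)) (1 / 2) with hsdef
    have hs0 : 0 < s := by positivity
    have hs2 : s ≤ 1 / 2 := min_le_right _ _
    set u₁ : Euc n := w.1 + s • (w.2 - w.1) with hu₁def
    have hu₁w : u₁ - w.1 = s • (w.2 - w.1) := by rw [hu₁def]; abel
    have hnu₁ : ‖u₁ - w.1‖ = s * d := by
      rw [hu₁w, norm_smul, Real.norm_eq_abs, abs_of_pos hs0, norm_sub_rev]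
    have hu₁K : u₁ ∈ K₁ := by
      refine interior_subset (hrsub ?_)
      rw [Metric.mem_ball, dist_eq_norm, hnu₁]
      have : s ≤ r / (2 * d) := min_le_left _ _
      nlinarith [mul_le_mul_of_nonneg_right (min_le_left (r / (2 * d)) (1 / 2 : ℝ)) hd.le,
        div_mul_cancel₀ r (ne_of_gt (by positivity : (0:ℝ) < 2 * d)), hd, hr]
    have hb₁ : ‖u₁ - w.1‖ ≤ d₀ := by rw [hnu₁]; nlinarith
    have := hEk u₁ hu₁K w.2 hw2K hb₁ (by simp [hd₀.le])
    have hu₁2 : u₁ - w.2 = (1 - s) • (w.1 - w.2) := by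
      rw [hu₁def]; module
    rw [hu₁2, norm_smul, Real.norm_eq_abs, abs_of_pos (by linarith : (0:ℝ) < 1 - s),
      hnu₁] at this
    simp only [sub_self, norm_zero, add_zero] at this
    rw [← hddef] at this
    nlinarith [mul_pos hs0 hd]
  have hfr2 : w.2 ∈ frontier K₂ := by
    rw [hK₂.frontier_eq]
    refine ⟨hw2K, fun hint => ?_⟩
    obtain ⟨r, hr, hrsub⟩ := Metric.isOpen_iff.mp isOpen_interior w.2 hint
    set s : ℝ := min (r / (2 * d)) (1 / 2) with hsdef
    have hs0 : 0 < s := by positivity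
    have hs2 : s ≤ 1 / 2 := min_le_right _ _
    set u₂ : Euc n := w.2 + s • (w.1 - w.2) with hu₂def
    have hu₂w : u₂ - w.2 = s • (w.1 - w.2) := by rw [hu₂def]; abel
    have hnu₂ : ‖u₂ - w.2‖ = s * d := by
      rw [hu₂w, norm_smul, Real.norm_eq_abs, abs_of_pos hs0]
    have hu₂K : u₂ ∈ K₂ := by
      refine interior_subset (hrsub ?_)
      rw [Metric.mem_ball, dist_eq_norm, hnu₂]
      have : s ≤ r / (2 * d) := min_le_left _ _
      nlinarith [mul_le_mul_of_nonneg_right (min_le_left (r / (2 * d)) (1 / 2 : ℝ)) hd.le,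
        div_mul_cancel₀ r (ne_of_gt (by positivity : (0:ℝ) < 2 * d)), hd, hr]
    have hb₂ : ‖u₂ - w.2‖ ≤ d₀ := by rw [hnu₂]; nlinarith
    have := hEk w.1 hw1K u₂ hu₂K (by simp [hd₀.le]) hb₂
    have hu₂1 : w.1 - u₂ = (1 - s) • (w.1 - w.2) := by
      rw [hu₂def]; module
    rw [hu₂1, norm_smul, Real.norm_eq_abs, abs_of_pos (by linarith : (0:ℝ) < 1 - s),
      hnu₂] at this
    simp only [sub_self, norm_zero, zero_add] at this
    rw [← hddef] at this
    nlinarith [mul_pos hs0 hd]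
  -- both points lie in N
  have hd₀ε : d₀ / ε ≤ δ / 4 := by rw [div_le_iff₀ hε]; nlinarith
  have hw1N : w.1 ∈ N := by
    refine hball ?_
    rw [Metric.mem_ball, dist_eq_norm]
    calc ‖w.1 - x₀‖ ≤ ‖w.1 - p‖ + ‖p - x₀‖ := norm_sub_le_norm_sub_add_norm_sub _ _ _
      _ < δ / 4 + δ / 4 := by have := hw1b; linarith
      _ < δ := by linarith
  have hw2N : w.2 ∈ N := by
    refine hball ?_
    rw [Metric.mem_ball, dist_eq_norm]
    calc ‖w.2 - x₀‖ ≤ ‖w.2 - q‖ + ‖q - x₀‖ := norm_sub_le_norm_sub_add_norm_sub _ _ _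
      _ < δ / 4 + δ / 4 := by have := hw2b; linarith
      _ < δ := by linarith
  obtain ⟨v₁, hv₁, v₂, hv₂, hpn, hαe⟩ := htr w.1 ⟨⟨hfr1, hc1⟩, hw1N⟩ w.2 ⟨⟨hfr2, hc2⟩, hw2N⟩
  -- directional inequalities
  have hdir1 : 0 ≤ ⟪w.1 - w.2, v₁⟫ + ε * d * ‖v₁‖ := by
    refine dir_ineq hd hd₀ hε hv₁ ?_
    intro u hu hub
    have := hEk u hu w.2 hw2K hub (by simp [hd₀.le])
    simp only [sub_self, norm_zero, add_zero] at this
    have heq : u - w.2 = (w.1 - w.2) + (u - w.1) := by abel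
    rw [heq] at this
    linarith
  have hdir2 : 0 ≤ ⟪w.2 - w.1, v₂⟫ + ε * ‖w.2 - w.1‖ * ‖v₂‖ := by
    refine dir_ineq (by rwa [norm_sub_rev]) hd₀ hε hv₂ ?_
    intro u hu hub
    have := hEk w.1 hw1K u hu (by simp [hd₀.le]) hub
    simp only [sub_self, norm_zero, zero_add] at this
    have heq : w.1 - u = -((w.2 - w.1) + (u - w.2)) := by abel
    rw [heq, norm_neg] at this
    rw [norm_sub_rev]
    linarith
  rw [norm_sub_rev w.2 w.1] at hdir2
  -- norms of v₁, v₂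
  have hv1n : ‖v₁‖ ≤ c * d := by
    refine le_trans ?_ hpn
    calc ‖v₁‖ = Real.sqrt (‖v₁‖ ^ 2) := (Real.sqrt_sq (norm_nonneg _)).symm
      _ ≤ pairNorm v₁ v₂ := Real.sqrt_le_sqrt (by nlinarith [sq_nonneg ‖v₂‖])
  have hv2n : ‖v₂‖ ≤ c * d := by
    refine le_trans ?_ hpn
    calc ‖v₂‖ = Real.sqrt (‖v₂‖ ^ 2) := (Real.sqrt_sq (norm_nonneg _)).symm
      _ ≤ pairNorm v₁ v₂ := Real.sqrt_le_sqrt (by nlinarith [sq_nonneg ‖v₁‖])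
  -- the contradiction
  obtain ⟨e, he_def⟩ : ∃ e, w.2 - w.1 - (v₁ - v₂) = e := ⟨_, rfl⟩
  rw [he_def] at hαe
  have h1 : v₁ - v₂ = -(w.1 - w.2) - e := by rw [← he_def]; abel
  have hinner : ⟪w.1 - w.2, v₁ - v₂⟫ = -d ^ 2 - ⟪w.1 - w.2, e⟫ := by
    rw [h1, inner_sub_right, inner_neg_right, real_inner_self_eq_norm_sq, ← hddef]
  have hsub : ⟪w.1 - w.2, v₁ - v₂⟫ = ⟪w.1 - w.2, v₁⟫ - ⟪w.1 - w.2, v₂⟫ := inner_sub_right _ _ _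
  have he : -⟪w.1 - w.2, e⟫ ≤ d * (α * d) := by
    calc -⟪w.1 - w.2, e⟫ = ⟪w.1 - w.2, -e⟫ := by rw [inner_neg_right]
      _ ≤ ‖w.1 - w.2‖ * ‖-e‖ := real_inner_le_norm _ _
      _ = ‖w.1 - w.2‖ * ‖e‖ := by rw [norm_neg]
      _ ≤ d * (α * d) := mul_le_mul le_rfl hαe (norm_nonneg _) hd.le
  have h2ne : ⟪w.2 - w.1, v₂⟫ = -⟪w.1 - w.2, v₂⟫ := by
    rw [show w.2 - w.1 = -(w.1 - w.2) by abel, inner_neg_left]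
  rw [h2ne, ← hddef] at hdir2
  have h3 : ⟪w.1 - w.2, v₁⟫ - ⟪w.1 - w.2, v₂⟫ = -d ^ 2 - ⟪w.1 - w.2, e⟫ := by
    rw [← hsub, hinner]
  have hεα' : ε * (4 * c) ≤ 1 - α := by
    rw [le_div_iff₀ (by positivity : (0:ℝ) < 4 * c)] at hεα
    linarith
  exact arith_contra d c ε α ‖v₁‖ ‖v₂‖ ⟪w.1 - w.2, v₁⟫ ⟪w.1 - w.2, v₂⟫ ⟪w.1 - w.2, e⟫
    hd hc hε hdir1 hdir2 h3 he hv1n hv2n hεα'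

/-- Under the transversality condition (◇) at `x₀`, any pair of sequences
`x₁ᵢ ∈ K₁ \ K₂`, `x₂ᵢ ∈ K₂ \ K₁` converging to `x₀` admits, after passing to a
subsequence, approximating sequences `x₁ᵢ* ∈ K₁`, `x₂ᵢ* ∈ K₂` with
`x*_{σ(i) i} ∈ K₁ ∩ K₂` and `|x₁ᵢ − x₁ᵢ*| + |x₂ᵢ − x₂ᵢ*| ≤ l·|x₁ᵢ − x₂ᵢ|`. -/
theorem ekeland_approximation_claim {n : ℕ} (K₁ K₂ : Set (Euc n))
    (hK₁ : IsClosed K₁) (hK₂ : IsClosed K₂)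
    (x₀ : Euc n) (hx₀ : x₀ ∈ frontier K₁ ∩ frontier K₂)
    (htrans : TransversalAt K₁ K₂ x₀)
    (x₁ x₂ : ℕ → Euc n)
    (hx₁ : ∀ i, x₁ i ∈ K₁ \ K₂) (hx₂ : ∀ i, x₂ i ∈ K₂ \ K₁)
    (hlim₁ : Tendsto x₁ atTop (𝓝 x₀)) (hlim₂ : Tendsto x₂ atTop (𝓝 x₀)) :
    ∃ ψ : ℕ → ℕ, StrictMono ψ ∧
      ∃ y₁ y₂ : ℕ → Euc n, ∃ l > 0, ∃ σ : ℕ → Fin 2,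
        (∀ i, y₁ i ∈ K₁) ∧ (∀ i, y₂ i ∈ K₂) ∧
        (∀ i, (if σ i = 0 then y₁ i else y₂ i) ∈ K₁ ∩ K₂) ∧
        (∀ i, ‖x₁ (ψ i) - y₁ i‖ + ‖x₂ (ψ i) - y₂ i‖ ≤ l * ‖x₁ (ψ i) - x₂ (ψ i)‖) := by
  classical
  obtain ⟨N, hN, c, hc, α, hα, htr⟩ := htrans
  obtain ⟨δ, hδ, hball⟩ := Metric.mem_nhds_iff.mp hN
  have hα1 : α < 1 := hα.2
  have h1α : (0:ℝ) < 1 - α := by linarith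
  set ε : ℝ := min (1/2) ((1 - α)/(4*c)) with hεdef
  have hε : 0 < ε := lt_min (by norm_num) (div_pos h1α (by positivity))
  have hε2 : ε ≤ 1/2 := min_le_left _ _
  have hεα : ε ≤ (1-α)/(4*c) := min_le_right _ _
  have h1 : ∀ᶠ i in atTop, ‖x₁ i - x₀‖ < δ/4 := by
    have := hlim₁.eventually (Metric.ball_mem_nhds x₀ (by positivity : (0:ℝ) < δ/4))
    simpa [Metric.mem_ball, dist_eq_norm] using this
  have h2 : ∀ᶠ i in atTop, ‖x₂ i - x₀‖ < δ/4 := by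
    have := hlim₂.eventually (Metric.ball_mem_nhds x₀ (by positivity : (0:ℝ) < δ/4))
    simpa [Metric.mem_ball, dist_eq_norm] using this
  have h3 : Tendsto (fun i => ‖x₁ i - x₂ i‖) atTop (𝓝 0) := by
    have := (hlim₁.sub hlim₂).norm
    simpa using this
  have h4 : ∀ᶠ i in atTop, ‖x₁ i - x₂ i‖ < ε*(δ/4) :=
    h3.eventually_lt_const (by positivity)
  obtain ⟨i₀, hi₀⟩ := Filter.eventually_atTop.mp ((h1.and h2).and h4)
  refine ⟨fun i => i + i₀, fun a b hab => by simpa using Nat.add_lt_add_right hab i₀, ?_⟩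
  have H : ∀ i : ℕ, ∃ y₁ ∈ K₁, ∃ y₂ ∈ K₂, (y₁ ∈ K₂ ∨ y₂ ∈ K₁) ∧
      ‖x₁ (i + i₀) - y₁‖ + ‖x₂ (i + i₀) - y₂‖ ≤ ε⁻¹ * ‖x₁ (i + i₀) - x₂ (i + i₀)‖ := by
    intro i
    obtain ⟨⟨ha, hb⟩, hcc⟩ := hi₀ (i + i₀) (Nat.le_add_left _ _)
    exact key_step hK₁ hK₂ hc hα.1 hα1 hε hε2 hεα hδ hball htr (hx₁ _) (hx₂ _) ha hb hcc.le
  choose y₁ hy₁ y₂ hy₂ hor hbnd using H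
  refine ⟨y₁, y₂, ε⁻¹, by positivity, fun i => if y₁ i ∈ K₂ then 0 else 1,
    hy₁, hy₂, ?_, hbnd⟩
  intro i
  by_cases h : y₁ i ∈ K₂
  · simpa [h] using Set.mem_inter (hy₁ i) h
  · simpa [h] using Set.mem_inter ((hor i).resolve_left h) (hy₂ i)
end

section
/- Let K, C ⊆ ℝⁿ be closed and let F : ℝⁿ ⇉ ℝⁿ be a continuous set-valued map. Suppose (i) F(x) ⊆ T_K(x) for all x ∈ ∂K ∩ int(C), (ii) ∂K ∩ int(C) is dense in ∂(K ∩ C) (every point of ∂(K ∩ C) is the limit of a sequence in ∂K ∩ int(C)), and (iii) the set-valued map x ↦ T_{K∩C}(x) is upper semicontinuous at every point of ∂K ∩ ∂C. Then F(x) ⊆ T_{K∩C}(x) for all x ∈ ∂(K ∩ C). -/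
open MeasureTheory Filter Topology Set
open scoped RealInnerProductSpace

variable {E : Type*} [NormedAddCommGroup E] [InnerProductSpace ℝ E]

lemma zero_mem_contingentCone {S : Set E} {x : E} (hx : x ∈ S) :
    (0 : E) ∈ contingentCone S x :=
  ⟨fun i => 1 / (i + 1), fun _ => 0, fun i => by positivity,
    tendsto_one_div_add_atTop_nhds_zero_nat, tendsto_const_nhds, fun i => by simpa using hx⟩

lemma isClosed_contingentCone (S : Set E) (x : E) : IsClosed (contingentCone S x) := by
  rw [← closure_eq_iff_isClosed]
  apply Subset.antisymm _ subset_closure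
  intro v hv
  obtain ⟨V, hV, hVv⟩ := mem_closure_iff_seq_limit.mp hv
  have key : ∀ j : ℕ, ∃ p : ℝ × E, 0 < p.1 ∧ p.1 < 1 / (j + 1) ∧
      dist p.2 (V j) < 1 / (j + 1) ∧ x + p.1 • p.2 ∈ S := by
    intro j
    obtain ⟨t, w, ht, ht0, hw, hmem⟩ := hV j
    have hpos : (0:ℝ) < 1 / (j + 1) := by positivity
    obtain ⟨N1, hN1⟩ := (Metric.tendsto_atTop.mp ht0) _ hpos
    obtain ⟨N2, hN2⟩ := (Metric.tendsto_atTop.mp hw) _ hpos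
    refine ⟨(t (max N1 N2), w (max N1 N2)), ht _, ?_, hN2 _ (le_max_right _ _), hmem _⟩
    have := hN1 _ (le_max_left N1 N2)
    rw [Real.dist_eq, abs_sub_lt_iff] at this
    linarith [this.1]
  choose p hp1 hp2 hp3 hp4 using key
  refine ⟨fun j => (p j).1, fun j => (p j).2, hp1, ?_, ?_, hp4⟩
  · refine squeeze_zero (fun j => (hp1 j).le) (fun j => (hp2 j).le)
      tendsto_one_div_add_atTop_nhds_zero_nat
  · rw [tendsto_iff_dist_tendsto_zero]
    refine squeeze_zero (fun j => dist_nonneg) (fun j => ?_)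
      ((tendsto_one_div_add_atTop_nhds_zero_nat.add
        (tendsto_iff_dist_tendsto_zero.mp hVv)).mono_right (by simp))
    calc dist (p j).2 v ≤ dist (p j).2 (V j) + dist (V j) v := dist_triangle _ _ _
      _ ≤ 1 / (j + 1) + dist (V j) v := by linarith [hp3 j]

lemma contingentCone_inter_of_mem_interior {K C : Set E} {y : E} (hy : y ∈ interior C) :
    contingentCone K y ⊆ contingentCone (K ∩ C) y := by
  rintro v ⟨t, w, ht, ht0, hw, hmem⟩
  have hsm : Tendsto (fun i => y + t i • w i) atTop (𝓝 y) := by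
    have h0 : Tendsto (fun i => t i • w i) atTop (𝓝 ((0:ℝ) • v)) := ht0.smul hw
    rw [zero_smul] at h0
    simpa using tendsto_const_nhds.add h0
  have hev : ∀ᶠ i in atTop, y + t i • w i ∈ C :=
    hsm.eventually (mem_of_superset (isOpen_interior.mem_nhds hy) interior_subset)
  obtain ⟨N, hN⟩ := eventually_atTop.mp hev
  exact ⟨fun i => t (i + N), fun i => w (i + N), fun i => ht _,
    ht0.comp (tendsto_add_atTop_nat N), hw.comp (tendsto_add_atTop_nat N),
    fun i => ⟨hmem _, hN _ le_add_self⟩⟩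

/-- If `F(x) ⊆ T_K(x)` on `∂K ∩ int C`, `∂K ∩ int C` is dense in
`∂(K ∩ C)`, and `T_{K∩C}` is upper semicontinuous on `∂K ∩ ∂C`, then
`F(x) ⊆ T_{K∩C}(x)` on all of `∂(K ∩ C)`. -/
theorem tangency_extends_by_density {n : ℕ} (K C : Set (Euc n))
    (F : Euc n → Set (Euc n)) (hK : IsClosed K) (hC : IsClosed C)
    (hF : SVContinuous F)
    (hTang : ∀ x ∈ frontier K ∩ interior C, F x ⊆ contingentCone K x)
    (hDense : ∀ x ∈ frontier (K ∩ C), ∃ u : ℕ → Euc n,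
      (∀ i, u i ∈ frontier K ∩ interior C) ∧ Tendsto u atTop (𝓝 x))
    (hUSC : ∀ x ∈ frontier K ∩ frontier C,
      SVUpperSemicontinuousAt (contingentCone (K ∩ C)) (𝓝 x) x) :
    ∀ x ∈ frontier (K ∩ C), F x ⊆ contingentCone (K ∩ C) x := by
  intro x hx v hv
  have hKC : IsClosed (K ∩ C) := hK.inter hC
  have hxKC : x ∈ K ∩ C := hKC.frontier_subset hx
  by_cases hxC : x ∈ interior C
  · -- then x ∈ frontier K, use hTang directly
    have hxK : x ∈ frontier K := by
      refine ⟨subset_closure hxKC.1, ?_⟩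
      intro hxint
      exact hx.2 (mem_interior_iff_mem_nhds.mpr
        (Filter.inter_mem (mem_interior_iff_mem_nhds.mp hxint)
          (mem_interior_iff_mem_nhds.mp hxC)))
    exact contingentCone_inter_of_mem_interior hxC (hTang x ⟨hxK, hxC⟩ hv)
  · -- x ∈ ∂C and x ∈ ∂K (as a limit of points of ∂K), use USC argument
    obtain ⟨u, hu, hux⟩ := hDense x hx
    have hxK : x ∈ frontier K :=
      isClosed_frontier.mem_of_tendsto hux (Eventually.of_forall fun i => (hu i).1)
    have hxC' : x ∈ frontier C := ⟨subset_closure hxKC.2, hxC⟩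
    by_contra hvT
    set T := contingentCone (K ∩ C) x with hTdef
    have hTne : T.Nonempty := ⟨0, zero_mem_contingentCone hxKC⟩
    have hTcl : IsClosed T := isClosed_contingentCone _ _
    have hd : 0 < Metric.infDist v T := by
      exact (hTcl.notMem_iff_infDist_pos hTne).mp hvT
    set d := Metric.infDist v T
    set U : Set (Euc n) := {y | Metric.infDist y T < d / 2} with hUdef
    have hUopen : IsOpen U :=
      isOpen_lt (Metric.continuous_infDist_pt T) continuous_const
    have hTU : T ⊆ U := fun y hy => by
      simp only [hUdef, mem_setOf_eq]
      rw [Metric.infDist_zero_of_mem hy]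
      linarith
    have hUSCx := hUSC x ⟨hxK, hxC'⟩ U hUopen hTU
    have hLSCx := (hF x).1 (Metric.ball v (d / 4)) Metric.isOpen_ball
      ⟨v, hv, Metric.mem_ball_self (by linarith)⟩
    obtain ⟨i, hi1, hi2⟩ := (hux.eventually (hUSCx.and hLSCx)).exists
    obtain ⟨w, hwF, hwb⟩ := hi2
    have hwT : w ∈ contingentCone (K ∩ C) (u i) :=
      contingentCone_inter_of_mem_interior (hu i).2 (hTang (u i) (hu i) hwF)
    have hwU : Metric.infDist w T < d / 2 := hi1 hwT
    have : d ≤ Metric.infDist w T + dist v w := Metric.infDist_le_infDist_add_dist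
    rw [Metric.mem_ball, dist_comm] at hwb
    linarith
end
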